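/- arXiv:1611.00898 — 2 statements merged into one kernel-verified Lean document; each statement's English description precedes it below -/
import Mathlib

section
/- Let L be a real n×m₁ matrix, N a real m₂×d matrix, A a real n×d matrix, k ≥ 1 an integer, S a real m×n matrix, and c₁ ≥ 0, c₂ > 0, c ≥ 1 real numbers. Let X* be a real m₁×m₂ matrix of rank at most k with ‖LX*N − A‖₁ ≤ ‖LXN − A‖₁ for all m₁×m₂ matrices X of rank at most k. Suppose ‖S(LX*N − A)‖₁ ≤ c₁ · ‖LX*N − A‖₁ and ‖SLx‖₁ ≥ (1/c₂) · ‖Lx‖₁ for all x ∈ ℝ^{m₁}. Then any m₁×m₂ matrix X̂ of rank at most k satisfying ‖SLX̂N − SA‖₁ ≤ c · ‖SLXN − SA‖₁ for all m₁×m₂ matrices X of rank at most k also satisfies ‖LX̂N − A‖₁ ≤ c · (2c₁c₂ + 1) · ‖LX*N − A‖₁. -/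
open Matrix

/-- The entrywise `ℓ₁` norm of a matrix. -/
noncomputable def l1M {n d : ℕ} (M : Matrix (Fin n) (Fin d) ℝ) : ℝ :=
  ∑ i, ∑ j, |M i j|

/-- The `ℓ₁` norm of a vector. -/
noncomputable def l1V {n : ℕ} (v : Fin n → ℝ) : ℝ :=
  ∑ i, |v i|

lemma l1M_nonneg {n d : ℕ} (M : Matrix (Fin n) (Fin d) ℝ) : 0 ≤ l1M M := by
  apply Finset.sum_nonneg; intros; apply Finset.sum_nonneg; intros; exact abs_nonneg _

lemma l1M_sub_comm {n d : ℕ} (A B : Matrix (Fin n) (Fin d) ℝ) :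
    l1M (A - B) = l1M (B - A) := by
  simp only [l1M, Matrix.sub_apply]
  congr 1; ext i; congr 1; ext j; exact abs_sub_comm _ _

lemma l1M_tri {n d : ℕ} (A B C : Matrix (Fin n) (Fin d) ℝ) :
    l1M (A - B) ≤ l1M (A - C) + l1M (C - B) := by
  simp only [l1M, Matrix.sub_apply, ← Finset.sum_add_distrib]
  apply Finset.sum_le_sum; intro i _
  apply Finset.sum_le_sum; intro j _
  exact abs_sub_le _ _ _

lemma l1M_mul_cols {p q r : ℕ} (L : Matrix (Fin p) (Fin q) ℝ) (Y : Matrix (Fin q) (Fin r) ℝ) :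
    l1M (L * Y) = ∑ j, l1V (L.mulVec (fun i => Y i j)) := by
  simp only [l1M, l1V, Matrix.mul_apply, Matrix.mulVec, dotProduct]
  rw [Finset.sum_comm]

/-- A sketch `S` with at most `c₁`-dilation on `LX*N − A` and at most `c₂`-contraction on `L`
provides a `(2c₁c₂ + 1)`-restricted-multiple-regression-cost preserving sketch: any rank-`k`
matrix `X̂` that is a `c`-approximate minimizer of the sketched problem is a `c(2c₁c₂ + 1)`-
approximate solution to the original problem. -/
theorem restricted_multiple_regression_cost_preserving_sketch {n d m₁ m₂ m k : ℕ} (hk : 1 ≤ k)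
    (L : Matrix (Fin n) (Fin m₁) ℝ) (N : Matrix (Fin m₂) (Fin d) ℝ)
    (A : Matrix (Fin n) (Fin d) ℝ) (S : Matrix (Fin m) (Fin n) ℝ)
    (c₁ c₂ c : ℝ) (hc₁ : 0 ≤ c₁) (hc₂ : 0 < c₂) (hc : 1 ≤ c)
    (Xstar : Matrix (Fin m₁) (Fin m₂) ℝ) (hXstar_rank : Xstar.rank ≤ k)
    (hXstar : ∀ X : Matrix (Fin m₁) (Fin m₂) ℝ, X.rank ≤ k →
      l1M (L * Xstar * N - A) ≤ l1M (L * X * N - A))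
    (hdil : l1M (S * (L * Xstar * N - A)) ≤ c₁ * l1M (L * Xstar * N - A))
    (hcon : ∀ x : Fin m₁ → ℝ, (1 / c₂) * l1V (L.mulVec x) ≤ l1V (S.mulVec (L.mulVec x)))
    (Xhat : Matrix (Fin m₁) (Fin m₂) ℝ) (hXhat_rank : Xhat.rank ≤ k)
    (hXhat : ∀ X : Matrix (Fin m₁) (Fin m₂) ℝ, X.rank ≤ k →
      l1M (S * L * Xhat * N - S * A) ≤ c * l1M (S * L * X * N - S * A)) :
    l1M (L * Xhat * N - A) ≤ c * (2 * c₁ * c₂ + 1) * l1M (L * Xstar * N - A) := by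
  set Y : Matrix (Fin m₁) (Fin d) ℝ := Xhat * N - Xstar * N with hY
  have hLY : L * Y = L * Xhat * N - L * Xstar * N := by
    rw [hY, Matrix.mul_sub, ← Matrix.mul_assoc, ← Matrix.mul_assoc]
  have hSLY : (S * L) * Y = S * L * Xhat * N - S * L * Xstar * N := by
    rw [hY, Matrix.mul_sub, ← Matrix.mul_assoc, ← Matrix.mul_assoc]
  -- contraction bound
  have key : l1M (L * Y) ≤ c₂ * l1M ((S * L) * Y) := by
    rw [l1M_mul_cols, l1M_mul_cols, Finset.mul_sum]
    apply Finset.sum_le_sum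
    intro j _
    have h := hcon (fun i => Y i j)
    have hmv : (S * L).mulVec (fun i => Y i j) = S.mulVec (L.mulVec (fun i => Y i j)) :=
      (Matrix.mulVec_mulVec _ _ _).symm
    rw [hmv]
    calc l1V (L.mulVec fun i => Y i j) = c₂ * ((1 / c₂) * l1V (L.mulVec fun i => Y i j)) := by
          field_simp
      _ ≤ c₂ * l1V (S.mulVec (L.mulVec fun i => Y i j)) := by
          exact mul_le_mul_of_nonneg_left h hc₂.le
  -- dilation rewrite
  have hSrw : S * (L * Xstar * N - A) = S * L * Xstar * N - S * A := by
    rw [Matrix.mul_sub, ← Matrix.mul_assoc, ← Matrix.mul_assoc]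
  have hdil' : l1M (S * L * Xstar * N - S * A) ≤ c₁ * l1M (L * Xstar * N - A) := by
    rw [← hSrw]; exact hdil
  have happ := hXhat Xstar hXstar_rank
  have htriS : l1M (S * L * Xhat * N - S * L * Xstar * N) ≤
      l1M (S * L * Xhat * N - S * A) + l1M (S * A - S * L * Xstar * N) :=
    l1M_tri _ _ _
  have hflip : l1M (S * A - S * L * Xstar * N) = l1M (S * L * Xstar * N - S * A) :=
    l1M_sub_comm _ _
  have htri : l1M (L * Xhat * N - A) ≤
      l1M (L * Xhat * N - L * Xstar * N) + l1M (L * Xstar * N - A) := l1M_tri _ _ _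
  have hopt := l1M_nonneg (L * Xstar * N - A)
  rw [hLY] at key
  rw [hSLY] at key
  have h1 : l1M (S * L * Xhat * N - S * A) ≤ c * (c₁ * l1M (L * Xstar * N - A)) :=
    happ.trans (mul_le_mul_of_nonneg_left hdil' (by linarith))
  have h2 : l1M (S * L * Xhat * N - S * L * Xstar * N) ≤
      c * (c₁ * l1M (L * Xstar * N - A)) + c₁ * l1M (L * Xstar * N - A) := by
    rw [hflip] at htriS; linarith
  have h3 := mul_le_mul_of_nonneg_left h2 hc₂.le
  nlinarith [key, htri, h3, hopt,
    mul_nonneg (mul_nonneg (mul_nonneg (sub_nonneg.2 hc) hc₁) hc₂.le) hopt,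
    mul_nonneg (sub_nonneg.2 hc) hopt]
end

section
/- Let 1 < p < 2, let L be a real n×m₁ matrix, N a real m₂×d matrix, A a real n×d matrix, k ≥ 1 an integer, T₁ a real t₁×n matrix, T₂ a real d×t₂ matrix, and c₁, c₁' ≥ 0, c₂, c₂' > 0, c ≥ 1 real numbers. Let X* be an m₁×m₂ matrix of rank at most k with ‖LX*N − A‖_p^p ≤ ‖LXN − A‖_p^p for all rank ≤ k matrices X, and let X̃ be an m₁×m₂ matrix of rank at most k with ‖T₁(LX̃N − A)‖_p^p ≤ ‖T₁(LXN − A)‖_p^p for all rank ≤ k matrices X. Suppose: (a) ‖T₁(LX*N − A)‖_p^p ≤ c₁ · ‖LX*N − A‖_p^p; (b) ‖T₁Lx‖_p^p ≥ (1/c₂) · ‖Lx‖_p^p for all x ∈ ℝ^{m₁}; (c) ‖(T₁(LX̃N − A))T₂‖_p^p ≤ c₁' · ‖T₁(LX̃N − A)‖_p^p; (d) ‖T₂ᵀNᵀx‖_p^p ≥ (1/c₂') · ‖Nᵀx‖_p^p for all x ∈ ℝ^{m₂}. Then any m₁×m₂ matrix X̂ of rank at most k satisfying ‖T₁(LX̂N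 − A)T₂‖_p^p ≤ c · ‖T₁(LXN − A)T₂‖_p^p for all rank ≤ k matrices X also satisfies ‖LX̂N − A‖_p^p ≤ c · 2^{2p−2}·(2c₁c₂ + 1)(2c₁'c₂' + 1) · ‖LX*N − A‖_p^p. -/
/-!
Measure residuals in the entrywise `ℓ_p` norm `‖M‖ = (lppM p M)^(1/p)`, which satisfies the
triangle inequality because `p ≥ 1`. One sketching step is then a two-line estimate: if a sketch
`S` contracts `r - r₀` by at most `b`, dilates `r₀` by at most `a`, and `‖S r‖ ≤ γ ‖S r₀‖`, then
`‖r‖ ≤ ‖r - r₀‖ + ‖r₀‖ ≤ b (‖S r‖ + ‖S r₀‖) + ‖r₀‖ ≤ (b (γ + 1) a + 1) ‖r₀‖`.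

Apply it first to the right sketch `T₂` inside the `T₁`-sketched problem (`r₀ = T₁(LX̃N − A)`,
`γ = c^(1/p)`), then to the left sketch `T₁` (`r₀ = LX*N − A`, using that `X̃` is optimal for the
`T₁`-sketched problem so `‖T₁(LX̃N − A)‖ ≤ ‖T₁(LX*N − A)‖`). With `x = (c₁c₂)^(1/p)`,
`y = (c₁'c₂')^(1/p)`, `g = c^(1/p)` this gives `‖LX̂N − A‖ ≤ (x (y (g + 1) + 2) + 1) ‖LX*N − A‖`.
Raising to the `p`-th power with `(u + v)^p ≤ 2^(p-1) (u^p + v^p)` twice and `2^(p-1) ≤ 2`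
(this is where `p ≤ 2` enters) yields the constant `c 2^(2p-2) (2c₁c₂ + 1)(2c₁'c₂' + 1)`.
-/

open Matrix

/-- The `p`-th power of the entrywise `ℓ_p` norm of a matrix: `∑ i j, |M i j| ^ p`. -/
noncomputable def lppM {n d : ℕ} (p : ℝ) (M : Matrix (Fin n) (Fin d) ℝ) : ℝ :=
  ∑ i, ∑ j, |M i j| ^ p

/-- The `p`-th power of the `ℓ_p` norm of a vector: `∑ i, |v i| ^ p`. -/
noncomputable def lppV {n : ℕ} (p : ℝ) (v : Fin n → ℝ) : ℝ :=
  ∑ i, |v i| ^ p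

lemma AddGroupSeminorm.le_mul_of_sketch {E F : Type*} [AddGroup E] [AddGroup F]
    (ν : AddGroupSeminorm E) (μ : AddGroupSeminorm F) (S : E →+ F) {r r₀ : E} {a b γ : ℝ}
    (hb : 0 ≤ b) (hγ : 0 ≤ γ) (hcon : ν (r - r₀) ≤ b * μ (S (r - r₀)))
    (hdil : μ (S r₀) ≤ a * ν r₀) (happrox : μ (S r) ≤ γ * μ (S r₀)) :
    ν r ≤ (b * (γ + 1) * a + 1) * ν r₀ := by
  have hdiff : μ (S (r - r₀)) ≤ (γ + 1) * μ (S r₀) := by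
    rw [map_sub]
    linarith [map_sub_le_add μ (S r) (S r₀)]
  calc ν r ≤ ν (r - r₀) + ν r₀ := by simpa using map_add_le_add ν (r - r₀) r₀
    _ ≤ b * ((γ + 1) * μ (S r₀)) + ν r₀ := by gcongr; exact hcon.trans (by gcongr)
    _ ≤ b * ((γ + 1) * (a * ν r₀)) + ν r₀ := by gcongr
    _ = (b * (γ + 1) * a + 1) * ν r₀ := by ring

lemma lppM_nonneg {n d : ℕ} (p : ℝ) (M : Matrix (Fin n) (Fin d) ℝ) : 0 ≤ lppM p M := by
  unfold lppM; positivity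

lemma lppM_neg {n d : ℕ} (p : ℝ) (M : Matrix (Fin n) (Fin d) ℝ) : lppM p (-M) = lppM p M := by
  simp [lppM]

lemma lppM_transpose {n d : ℕ} (p : ℝ) (M : Matrix (Fin n) (Fin d) ℝ) :
    lppM p Mᵀ = lppM p M :=
  Finset.sum_comm

noncomputable def entrywiseLpSeminorm {n d : ℕ} (p : ℝ) (hp : 1 ≤ p) :
    AddGroupSeminorm (Matrix (Fin n) (Fin d) ℝ) where
  toFun M := lppM p M ^ p⁻¹
  map_zero' := by
    have hp0 : p ≠ 0 := by linarith
    simp [lppM, Real.zero_rpow hp0, Real.zero_rpow (inv_ne_zero hp0)]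
  add_le' M M' := by
    simpa [lppM, Fintype.sum_prod_type, one_div] using
      Real.Lp_add_le Finset.univ (fun x : Fin n × Fin d => M x.1 x.2) (fun x => M' x.1 x.2) hp
  neg' M := by simp only [lppM_neg]

section EntrywiseLpSeminorm

variable {n d n' d' : ℕ} {p : ℝ} (hp : 1 ≤ p)

lemma entrywiseLpSeminorm_rpow (M : Matrix (Fin n) (Fin d) ℝ) :
    entrywiseLpSeminorm p hp M ^ p = lppM p M :=
  Real.rpow_inv_rpow (lppM_nonneg p M) (by linarith)

lemma entrywiseLpSeminorm_le_of_lppM_le {M : Matrix (Fin n) (Fin d) ℝ}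
    {M' : Matrix (Fin n') (Fin d') ℝ} {t : ℝ} (ht : 0 ≤ t) (h : lppM p M ≤ t * lppM p M') :
    entrywiseLpSeminorm p hp M ≤ t ^ p⁻¹ * entrywiseLpSeminorm p hp M' := by
  change lppM p M ^ p⁻¹ ≤ t ^ p⁻¹ * lppM p M' ^ p⁻¹
  rw [← Real.mul_rpow ht (lppM_nonneg p M')]
  exact Real.rpow_le_rpow (lppM_nonneg p M) h (inv_nonneg.2 (by linarith))

lemma lppM_le_of_entrywiseLpSeminorm_le {M : Matrix (Fin n) (Fin d) ℝ}
    {M' : Matrix (Fin n') (Fin d') ℝ} {K : ℝ} (hK : 0 ≤ K)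
    (h : entrywiseLpSeminorm p hp M ≤ K * entrywiseLpSeminorm p hp M') :
    lppM p M ≤ K ^ p * lppM p M' := by
  rw [← entrywiseLpSeminorm_rpow hp M, ← entrywiseLpSeminorm_rpow hp M',
    ← Real.mul_rpow hK (apply_nonneg _ _)]
  exact Real.rpow_le_rpow (apply_nonneg _ _) h (by linarith)

lemma entrywiseLpSeminorm_le_of_sketch
    (S : Matrix (Fin n) (Fin d) ℝ →+ Matrix (Fin n') (Fin d') ℝ)
    {r r₀ : Matrix (Fin n) (Fin d) ℝ} {c₁ c₂ γ : ℝ} (hc₁ : 0 ≤ c₁) (hc₂ : 0 ≤ c₂) (hγ : 0 ≤ γ)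
    (hcon : lppM p (r - r₀) ≤ c₂ * lppM p (S (r - r₀)))
    (hdil : lppM p (S r₀) ≤ c₁ * lppM p r₀)
    (happrox : entrywiseLpSeminorm p hp (S r) ≤ γ * entrywiseLpSeminorm p hp (S r₀)) :
    entrywiseLpSeminorm p hp r ≤ ((c₁ * c₂) ^ p⁻¹ * (γ + 1) + 1) * entrywiseLpSeminorm p hp r₀ := by
  have h := AddGroupSeminorm.le_mul_of_sketch _ _ S (by positivity) hγ
    (entrywiseLpSeminorm_le_of_lppM_le hp hc₂ hcon)
    (entrywiseLpSeminorm_le_of_lppM_le hp hc₁ hdil) happrox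
  rwa [Real.mul_rpow hc₁ hc₂, mul_comm (c₁ ^ p⁻¹), mul_right_comm (c₂ ^ p⁻¹)]

end EntrywiseLpSeminorm

section Contraction

variable {p c : ℝ} {m n d t : ℕ}

lemma lppM_mul_le_of_lppV_transpose_mulVec_le (N : Matrix (Fin n) (Fin d) ℝ)
    (T : Matrix (Fin d) (Fin t) ℝ) (hc : 0 < c)
    (h : ∀ x, (1 / c) * lppV p (Nᵀ *ᵥ x) ≤ lppV p (Tᵀ *ᵥ (Nᵀ *ᵥ x)))
    (Z : Matrix (Fin m) (Fin n) ℝ) :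
    lppM p (Z * N) ≤ c * lppM p (Z * N * T) := by
  change ∑ i, lppV p ((Z * N) i) ≤ c * ∑ i, lppV p ((Z * N * T) i)
  rw [Finset.mul_sum]
  gcongr with i
  have hi := h (Z i)
  rwa [one_div, inv_mul_le_iff₀ hc, mulVec_transpose, mulVec_transpose] at hi

lemma lppM_mul_le_of_lppV_mulVec_le (L : Matrix (Fin n) (Fin d) ℝ)
    (T : Matrix (Fin t) (Fin n) ℝ) (hc : 0 < c)
    (h : ∀ x, (1 / c) * lppV p (L *ᵥ x) ≤ lppV p (T *ᵥ (L *ᵥ x)))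
    (Y : Matrix (Fin d) (Fin m) ℝ) :
    lppM p (L * Y) ≤ c * lppM p (T * (L * Y)) := by
  rw [← lppM_transpose, ← lppM_transpose p (T * _), transpose_mul, transpose_mul, transpose_mul]
  exact lppM_mul_le_of_lppV_transpose_mulVec_le Lᵀ Tᵀ hc (by simpa using h) Yᵀ

end Contraction

lemma Real.rpow_add_le_mul_rpow_add_rpow {x y p : ℝ} (hx : 0 ≤ x) (hy : 0 ≤ y) (hp : 1 ≤ p) :
    (x + y) ^ p ≤ 2 ^ (p - 1) * (x ^ p + y ^ p) := by
  lift x to NNReal using hx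
  lift y to NNReal using hy
  exact_mod_cast NNReal.rpow_add_le_mul_rpow_add_rpow x y hp

lemma two_level_factor_rpow_le {p a b c : ℝ} (hp1 : 1 ≤ p) (hp2 : p ≤ 2) (ha : 0 ≤ a)
    (hb : 0 ≤ b) (hc : 1 ≤ c) :
    (a ^ p⁻¹ * (b ^ p⁻¹ * (c ^ p⁻¹ + 1) + 1 + 1) + 1) ^ p ≤
      c * 2 ^ (2 * p - 2) * (2 * a + 1) * (2 * b + 1) := by
  have hp0 : p ≠ 0 := by linarith
  set q : ℝ := 2 ^ (p - 1) with hq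
  have hq0 : 0 ≤ q := by positivity
  have hq2 : q ≤ 2 := by
    simpa using Real.rpow_le_rpow_of_exponent_le (x := 2) (by norm_num) (by linarith : p - 1 ≤ 1)
  have h2p : (2 : ℝ) ^ p = 2 * q := by
    rw [hq, ← Real.rpow_one_add' (by norm_num) (by linarith)]
    ring_nf
  have h22 : (2 : ℝ) ^ (2 * p - 2) = q * q := by
    rw [hq, ← Real.rpow_add two_pos]
    ring_nf
  set x := a ^ p⁻¹
  set y := b ^ p⁻¹
  set g := c ^ p⁻¹
  have hx : 0 ≤ x := by positivity
  have hy : 0 ≤ y := by positivity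
  have hg : 0 ≤ g := by positivity
  have hg1p : (g + 1) ^ p ≤ 2 * q * c := by
    have : 1 ≤ g := Real.one_le_rpow hc (inv_nonneg.2 (by linarith))
    calc (g + 1) ^ p ≤ (2 * g) ^ p := by gcongr; linarith
      _ = 2 * q * c := by
          rw [Real.mul_rpow two_pos.le hg, h2p, Real.rpow_inv_rpow (by linarith) hp0]
  calc (x * (y * (g + 1) + 1 + 1) + 1) ^ p = ((x * y * (g + 1) + 1) + 2 * x) ^ p := by ring_nf
    _ ≤ q * ((x * y * (g + 1) + 1) ^ p + (2 * x) ^ p) :=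
        Real.rpow_add_le_mul_rpow_add_rpow (by positivity) (by positivity) hp1
    _ ≤ q * (q * ((x * y * (g + 1)) ^ p + 1 ^ p) + (2 * x) ^ p) := by
        gcongr
        exact Real.rpow_add_le_mul_rpow_add_rpow (by positivity) zero_le_one hp1
    _ = q * (q * (a * b * (g + 1) ^ p + 1) + 2 * q * a) := by
        rw [Real.mul_rpow (by positivity) (by positivity), Real.mul_rpow hx hy,
          Real.mul_rpow two_pos.le hx, Real.one_rpow, h2p, Real.rpow_inv_rpow ha hp0,
          Real.rpow_inv_rpow hb hp0]
    _ ≤ q * (q * (a * b * (2 * q * c) + 1) + 2 * q * a) := by gcongr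
    _ ≤ c * (q * q) * (2 * a + 1) * (2 * b + 1) := by
        have hab : 0 ≤ a * b * c * (2 - q) := by
          have := sub_nonneg.2 hq2; positivity
        have hc' : 0 ≤ (c - 1) * (2 * a + 1) := by
          have := sub_nonneg.2 hc; positivity
        have hbc : 0 ≤ b * c := mul_nonneg hb (by linarith)
        have hqq : 0 ≤ q * q := by positivity
        linarith [mul_nonneg hqq hab, mul_nonneg hqq hc', mul_nonneg hqq hbc]
    _ = c * 2 ^ (2 * p - 2) * (2 * a + 1) * (2 * b + 1) := by rw [h22]

theorem lp_two_sided_sketch_cost_preserving_general {n d m₁ m₂ t₁ t₂ k : ℕ}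
    (p : ℝ) (hp1 : 1 < p) (hp2 : p < 2)
    (L : Matrix (Fin n) (Fin m₁) ℝ) (N : Matrix (Fin m₂) (Fin d) ℝ)
    (A : Matrix (Fin n) (Fin d) ℝ)
    (T₁ : Matrix (Fin t₁) (Fin n) ℝ) (T₂ : Matrix (Fin d) (Fin t₂) ℝ)
    (c₁ c₁' c₂ c₂' c : ℝ)
    (hc₁ : 0 ≤ c₁) (hc₁' : 0 ≤ c₁') (hc₂ : 0 < c₂) (hc₂' : 0 < c₂') (hc : 1 ≤ c)
    (Xstar : Matrix (Fin m₁) (Fin m₂) ℝ) (hXstar_rank : Xstar.rank ≤ k)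
    (Xtil : Matrix (Fin m₁) (Fin m₂) ℝ) (hXtil_rank : Xtil.rank ≤ k)
    (hXtil : ∀ X : Matrix (Fin m₁) (Fin m₂) ℝ, X.rank ≤ k →
      lppM p (T₁ * (L * Xtil * N - A)) ≤ lppM p (T₁ * (L * X * N - A)))
    (ha : lppM p (T₁ * (L * Xstar * N - A)) ≤ c₁ * lppM p (L * Xstar * N - A))
    (hb : ∀ x : Fin m₁ → ℝ,
      (1 / c₂) * lppV p (L.mulVec x) ≤ lppV p (T₁.mulVec (L.mulVec x)))
    (hcc : lppM p ((T₁ * (L * Xtil * N - A)) * T₂) ≤ c₁' * lppM p (T₁ * (L * Xtil * N - A)))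
    (hdd : ∀ x : Fin m₂ → ℝ,
      (1 / c₂') * lppV p (Nᵀ.mulVec x) ≤ lppV p (T₂ᵀ.mulVec (Nᵀ.mulVec x)))
    (Xhat : Matrix (Fin m₁) (Fin m₂) ℝ)
    (hXhat : ∀ X : Matrix (Fin m₁) (Fin m₂) ℝ, X.rank ≤ k →
      lppM p (T₁ * (L * Xhat * N - A) * T₂) ≤ c * lppM p (T₁ * (L * X * N - A) * T₂)) :
    lppM p (L * Xhat * N - A) ≤
      c * (2 : ℝ) ^ (2 * p - 2) * (2 * c₁ * c₂ + 1) * (2 * c₁' * c₂' + 1) *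
        lppM p (L * Xstar * N - A) := by
  have hp : 1 ≤ p := hp1.le
  have sketched : entrywiseLpSeminorm p hp (T₁ * (L * Xhat * N - A)) ≤
      ((c₁' * c₂') ^ p⁻¹ * (c ^ p⁻¹ + 1) + 1) *
        entrywiseLpSeminorm p hp (T₁ * (L * Xtil * N - A)) := by
    refine entrywiseLpSeminorm_le_of_sketch hp (addMonoidHomMulRight T₂) hc₁' hc₂'.le
      (by positivity) ?_ hcc
      (entrywiseLpSeminorm_le_of_lppM_le hp (by linarith) (hXhat Xtil hXtil_rank))
    rw [show T₁ * (L * Xhat * N - A) - T₁ * (L * Xtil * N - A) = T₁ * L * (Xhat - Xtil) * N by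
      simp only [Matrix.mul_sub, Matrix.sub_mul, Matrix.mul_assoc]; abel]
    exact lppM_mul_le_of_lppV_transpose_mulVec_le N T₂ hc₂' hdd _
  have unsketched : entrywiseLpSeminorm p hp (L * Xhat * N - A) ≤
      ((c₁ * c₂) ^ p⁻¹ * ((c₁' * c₂') ^ p⁻¹ * (c ^ p⁻¹ + 1) + 1 + 1) + 1) *
        entrywiseLpSeminorm p hp (L * Xstar * N - A) := by
    refine entrywiseLpSeminorm_le_of_sketch hp (addMonoidHomMulLeft T₁) hc₁ hc₂.le
      (by positivity) ?_ ha (sketched.trans (mul_le_mul_of_nonneg_left ?_ (by positivity)))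
    · rw [show L * Xhat * N - A - (L * Xstar * N - A) = L * ((Xhat - Xstar) * N) by
        simp only [Matrix.mul_sub, Matrix.sub_mul, Matrix.mul_assoc]; abel]
      exact lppM_mul_le_of_lppV_mulVec_le L T₁ hc₂ hb _
    · exact Real.rpow_le_rpow (lppM_nonneg _ _) (hXtil Xstar hXstar_rank)
        (inv_nonneg.2 (by linarith))
  calc lppM p (L * Xhat * N - A)
      ≤ _ := lppM_le_of_entrywiseLpSeminorm_le hp (by positivity) unsketched
    _ ≤ _ := mul_le_mul_of_nonneg_right
        (two_level_factor_rpow_le hp hp2.le (by positivity) (by positivity) hc) (lppM_nonneg _ _)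
    _ = _ := by ring

/-- `ℓ_p` version of the two-sided sketching lemma: if `T₁` has at most `c₁`-dilation on
`LX*N − A` and at most `c₂`-contraction on `L`, and `T₂ᵀ` has at most `c₁'`-dilation on
`(T₁(LX̃N − A))ᵀ` and at most `c₂'`-contraction on `Nᵀ` (all in `‖·‖_p^p`), then any rank-`k`
`c`-approximate minimizer `X̂` of the doubly sketched problem satisfies
`‖LX̂N − A‖_p^p ≤ c·2^{2p−2}(2c₁c₂ + 1)(2c₁'c₂' + 1)·‖LX*N − A‖_p^p`. -/
theorem lp_two_sided_sketch_cost_preserving {n d m₁ m₂ t₁ t₂ k : ℕ} (hk : 1 ≤ k)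
    (p : ℝ) (hp1 : 1 < p) (hp2 : p < 2)
    (L : Matrix (Fin n) (Fin m₁) ℝ) (N : Matrix (Fin m₂) (Fin d) ℝ)
    (A : Matrix (Fin n) (Fin d) ℝ)
    (T₁ : Matrix (Fin t₁) (Fin n) ℝ) (T₂ : Matrix (Fin d) (Fin t₂) ℝ)
    (c₁ c₁' c₂ c₂' c : ℝ)
    (hc₁ : 0 ≤ c₁) (hc₁' : 0 ≤ c₁') (hc₂ : 0 < c₂) (hc₂' : 0 < c₂') (hc : 1 ≤ c)
    (Xstar : Matrix (Fin m₁) (Fin m₂) ℝ) (hXstar_rank : Xstar.rank ≤ k)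
    (hXstar : ∀ X : Matrix (Fin m₁) (Fin m₂) ℝ, X.rank ≤ k →
      lppM p (L * Xstar * N - A) ≤ lppM p (L * X * N - A))
    (Xtil : Matrix (Fin m₁) (Fin m₂) ℝ) (hXtil_rank : Xtil.rank ≤ k)
    (hXtil : ∀ X : Matrix (Fin m₁) (Fin m₂) ℝ, X.rank ≤ k →
      lppM p (T₁ * (L * Xtil * N - A)) ≤ lppM p (T₁ * (L * X * N - A)))
    (ha : lppM p (T₁ * (L * Xstar * N - A)) ≤ c₁ * lppM p (L * Xstar * N - A))
    (hb : ∀ x : Fin m₁ → ℝ,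
      (1 / c₂) * lppV p (L.mulVec x) ≤ lppV p (T₁.mulVec (L.mulVec x)))
    (hcc : lppM p ((T₁ * (L * Xtil * N - A)) * T₂) ≤ c₁' * lppM p (T₁ * (L * Xtil * N - A)))
    (hdd : ∀ x : Fin m₂ → ℝ,
      (1 / c₂') * lppV p (Nᵀ.mulVec x) ≤ lppV p (T₂ᵀ.mulVec (Nᵀ.mulVec x)))
    (Xhat : Matrix (Fin m₁) (Fin m₂) ℝ) (hXhat_rank : Xhat.rank ≤ k)
    (hXhat : ∀ X : Matrix (Fin m₁) (Fin m₂) ℝ, X.rank ≤ k →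
      lppM p (T₁ * (L * Xhat * N - A) * T₂) ≤ c * lppM p (T₁ * (L * X * N - A) * T₂)) :
    lppM p (L * Xhat * N - A) ≤
      c * (2 : ℝ) ^ (2 * p - 2) * (2 * c₁ * c₂ + 1) * (2 * c₁' * c₂' + 1) *
        lppM p (L * Xstar * N - A) :=
  lp_two_sided_sketch_cost_preserving_general p hp1 hp2 L N A T₁ T₂ c₁ c₁' c₂ c₂' c hc₁ hc₁' hc₂
    hc₂' hc Xstar hXstar_rank Xtil hXtil_rank hXtil ha hb hcc hdd Xhat hXhat
end
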